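/- An ortholattice satisfying the condition (a ≡ b = 1 implies a = b), where a ≡ b := (a∩b)∪(a'∩b'), is orthomodular, i.e., satisfies a ∪ (a' ∩ (a∪b)) = a ∪ b for all a, b. -/

import Mathlib

/-- An ortholattice as an algebra ⟨α, ', ∪, ∩⟩ with join `j` and
orthocomplement `c` primitive, and meet defined by De Morgan. -/
structure OrthoLattice (α : Type*) where
  j : α → α → α
  c : α → α
  j_comm : ∀ a b, j a b = j b a
  j_assoc : ∀ a b d, j (j a b) d = j a (j b d)
  c_invol : ∀ a, c (c a) = a
  j_top : ∀ a b, j a (j b (c b)) = j b (c b)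
  absorb : ∀ a b, j a (c (j (c a) (c b))) = a

namespace OrthoLattice

variable {α : Type*}

/-- meet: a ∩ b = (a' ∪ b')' -/
def m (L : OrthoLattice α) (a b : α) : α := L.c (L.j (L.c a) (L.c b))

/-- the unit 1 = a ∪ a' -/
def one (L : OrthoLattice α) (a : α) : α := L.j a (L.c a)

/-- quantum equivalence a ≡ b = (a∩b) ∪ (a'∩b') -/
def equiv (L : OrthoLattice α) (a b : α) : α := L.j (L.m a b) (L.m (L.c a) (L.c b))

/-- classical equivalence a ≡₀ b = (a'∪b) ∩ (a∪b') -/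
def equiv0 (L : OrthoLattice α) (a b : α) : α := L.m (L.j (L.c a) b) (L.j a (L.c b))

/-- Sasaki hook a →₁ b = a' ∪ (a ∩ b) -/
def sasaki (L : OrthoLattice α) (a b : α) : α := L.j (L.c a) (L.m a b)

end OrthoLattice

/-! In an ortholattice put `v = a ∪ b` and `u = a ∪ (a' ∩ v)`. Then `u ∪ v = v`, so `u ≡ v = u ∪ v'`,
and `u ∪ v' = 1` because `(a' ∩ v)' = a ∪ v'`. The hypothesis turns `u ≡ v = 1` into `u = v`,
which is the orthomodular law. -/

namespace OrthoLattice

variable {α : Type*} (L : OrthoLattice α)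

lemma c_m (a b : α) : L.c (L.m a b) = L.j (L.c a) (L.c b) := L.c_invol _

lemma m_c_c (a b : α) : L.m (L.c a) (L.c b) = L.c (L.j a b) := by
  rw [m, L.c_invol, L.c_invol]

lemma j_m_self (a b : α) : L.j a (L.m a b) = a := L.absorb a b

lemma m_j_self (a b : α) : L.m a (L.j a b) = a := by
  have h := L.absorb (L.c a) (L.c b)
  rw [L.c_invol, L.c_invol] at h
  rw [m, h, L.c_invol]

lemma m_comm (a b : α) : L.m a b = L.m b a := by
  rw [m, m, L.j_comm]

lemma j_idem (a : α) : L.j a a = a := by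
  calc L.j a a = L.j a (L.m a (L.j a a)) := by rw [L.m_j_self]
    _ = a := L.j_m_self a _

lemma j_j_self (a b : α) : L.j a (L.j a b) = L.j a b := by
  rw [← L.j_assoc, L.j_idem]

lemma one_eq_one (a b : α) : L.one a = L.one b := by
  unfold one
  rw [← L.j_top (L.j a (L.c a)) b, L.j_comm (L.j a (L.c a))]
  exact (L.j_top _ a).symm

lemma equiv_eq_j_c_of_j_eq {a b : α} (hab : L.j a b = b) : L.equiv a b = L.j a (L.c b) := by
  have hm : L.m a b = a := by rw [← hab, L.m_j_self]
  rw [equiv, hm, m_c_c, hab]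

lemma j_j_m_c_eq_of_j_eq {a v : α} (hav : L.j a v = v) : L.j (L.j a (L.m (L.c a) v)) v = v := by
  rw [L.j_assoc, L.j_comm _ v, ← L.j_assoc, hav, L.m_comm, L.j_m_self]

lemma j_j_m_c_c_eq_one (a v : α) : L.j (L.j a (L.m (L.c a) v)) (L.c v) = L.one a := by
  have hcw : L.c (L.m (L.c a) v) = L.j a (L.c v) := by rw [c_m, L.c_invol]
  rw [L.j_assoc, L.j_comm, L.j_assoc, L.j_comm (L.c v), ← hcw]
  exact L.one_eq_one _ a

end OrthoLattice

/-- an ortholattice with (a ≡ b = 1 ⟹ a = b) is orthomodular. -/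
theorem stmt2 {α : Type*} (L : OrthoLattice α)
    (h : ∀ a b : α, L.equiv a b = L.one a → a = b) :
    ∀ a b : α, L.j a (L.m (L.c a) (L.j a b)) = L.j a b := by
  intro a b
  have hle : L.j (L.j a (L.m (L.c a) (L.j a b))) (L.j a b) = L.j a b :=
    L.j_j_m_c_eq_of_j_eq (L.j_j_self a b)
  refine h _ _ ?_
  rw [L.equiv_eq_j_c_of_j_eq hle, L.j_j_m_c_c_eq_one, L.one_eq_one]
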